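/- arXiv:math/0210387 — 2 statements merged into one kernel-verified Lean document; each statement's English description precedes it below -/
import Mathlib

section
/- Atom substitution preserves derivability: if there is a derivation from structure P to structure Q in SKS, then replacing every occurrence of a fixed atom a by t and every occurrence of ¬a by f throughout the derivation yields a derivation from P[a↦t, ¬a↦f] to Q[a↦t, ¬a↦f]. Each rule instance either remains a valid instance or becomes an instance of the structural equivalence (e.g., ai↓ on atom a becomes S{t} = S[t,f], and ai↑ on atom a becomes S(t,f) = S{f}). -/
/-- Structures of system SKS. -/
inductive Str : Type
  | f : Str
  | t : Str
  | atom (n : ℕ) : Str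
  | or (A B : Str) : Str
  | and (A B : Str) : Str
  | neg (A : Str) : Str

/-- Positive contexts: a structure with one hole, not under a negation. -/
inductive Ctx : Type
  | hole : Ctx
  | orl (S : Ctx) (T : Str) : Ctx
  | orr (T : Str) (S : Ctx) : Ctx
  | andl (S : Ctx) (T : Str) : Ctx
  | andr (T : Str) (S : Ctx) : Ctx

def Ctx.fill : Ctx → Str → Str
  | .hole, R => R
  | .orl S T, R => .or (S.fill R) T
  | .orr T S, R => .or T (S.fill R)
  | .andl S T, R => .and (S.fill R) T
  | .andr T S, R => .and T (S.fill R)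

/-- Structural equivalence `=` of SKS. -/
inductive equiv : Str → Str → Prop
  | refl (R) : equiv R R
  | symm {A B} : equiv A B → equiv B A
  | trans {A B C} : equiv A B → equiv B C → equiv A C
  | or_congr {A B C D} : equiv A B → equiv C D → equiv (.or A C) (.or B D)
  | and_congr {A B C D} : equiv A B → equiv C D → equiv (.and A C) (.and B D)
  | neg_congr {A B} : equiv A B → equiv (.neg A) (.neg B)
  | or_assoc (A B C) : equiv (.or (.or A B) C) (.or A (.or B C))
  | or_comm (A B) : equiv (.or A B) (.or B A)
  | and_assoc (A B C) : equiv (.and (.and A B) C) (.and A (.and B C))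
  | and_comm (A B) : equiv (.and A B) (.and B A)
  | dm_or (A B) : equiv (.neg (.or A B)) (.and (.neg A) (.neg B))
  | dm_and (A B) : equiv (.neg (.and A B)) (.or (.neg A) (.neg B))
  | neg_neg (A) : equiv (.neg (.neg A)) A
  | neg_f : equiv (.neg .f) .t
  | neg_t : equiv (.neg .t) .f
  | or_f (R) : equiv (.or .f R) R
  | and_t (R) : equiv (.and .t R) R
  | or_t_t : equiv (.or .t .t) .t
  | and_f_f : equiv (.and .f .f) .f

/-- One inference step of SKS, applied in an arbitrary positive context. -/
inductive step : Str → Str → Prop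
  | ai_down (S : Ctx) (a : ℕ) :
      step (S.fill .t) (S.fill (.or (.atom a) (.neg (.atom a))))
  | ai_up (S : Ctx) (a : ℕ) :
      step (S.fill (.and (.atom a) (.neg (.atom a)))) (S.fill .f)
  | s (S : Ctx) (R U T : Str) :
      step (S.fill (.and (.or R U) T)) (S.fill (.or (.and R T) U))
  | c_down (S : Ctx) (R : Str) : step (S.fill (.or R R)) (S.fill R)
  | c_up (S : Ctx) (R : Str) : step (S.fill R) (S.fill (.and R R))
  | w_down (S : Ctx) (R : Str) : step (S.fill .f) (S.fill R)
  | w_up (S : Ctx) (R : Str) : step (S.fill R) (S.fill .t)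

/-- Derivations in SKS: chains of rule instances and equivalence steps. -/
inductive Deriv : Str → Str → Prop
  | refl (R) : Deriv R R
  | step {A B C} : step A B → Deriv B C → Deriv A C
  | eq {A B C} : equiv A B → Deriv B C → Deriv A C

/-- Substitute the unit `t` for the atom `a` and `f` for its negation `¬a`. -/
def subst (a : ℕ) : Str → Str
  | .f => .f
  | .t => .t
  | .atom n => if n = a then .t else .atom n
  | .or A B => .or (subst a A) (subst a B)
  | .and A B => .and (subst a A) (subst a B)
  | .neg (.atom n) => if n = a then .f else .neg (.atom n)
  | .neg A => .neg (subst a A)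

/-!
Substitution commutes with filling a positive context, so it suffices to treat one rule
instance or one equation at a time. Equations map to equations: the only place where
substitution and negation fail to commute is `¬a ↦ f`, which agrees with `¬(a ↦ t)` up to
the equation `¬t = f`. A rule instance maps to an instance of the same rule, except for
`ai↓` and `ai↑` on the atom `a` itself, which become the unit equations `t = [t, f]` and
`(t, f) = f`.
-/

def Ctx.subst (a : ℕ) : Ctx → Ctx
  | .hole => .hole
  | .orl S T => .orl (S.subst a) (_root_.subst a T)
  | .orr T S => .orr (_root_.subst a T) (S.subst a)
  | .andl S T => .andl (S.subst a) (_root_.subst a T)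
  | .andr T S => .andr (_root_.subst a T) (S.subst a)

theorem subst_fill (a : ℕ) (S : Ctx) (R : Str) :
    subst a (S.fill R) = (S.subst a).fill (subst a R) := by
  induction S <;> simp [Ctx.fill, Ctx.subst, subst, *]

theorem equiv.fill {A B : Str} (S : Ctx) (h : equiv A B) : equiv (S.fill A) (S.fill B) := by
  induction S with
  | hole => exact h
  | orl _ _ ih => exact ih.or_congr (.refl _)
  | orr _ _ ih => exact (equiv.refl _).or_congr ih
  | andl _ _ ih => exact ih.and_congr (.refl _)
  | andr _ _ ih => exact (equiv.refl _).and_congr ih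

theorem subst_neg_equiv (a : ℕ) (A : Str) : equiv (subst a (.neg A)) (.neg (subst a A)) := by
  cases A with
  | atom n =>
    by_cases h : n = a
    · simpa only [subst, if_pos h] using equiv.neg_t.symm
    · simpa only [subst, if_neg h] using equiv.refl _
  | _ => exact .refl _

theorem equiv.subst (a : ℕ) {A B : Str} (h : equiv A B) :
    equiv (_root_.subst a A) (_root_.subst a B) := by
  induction h with
  | refl => exact .refl _
  | symm _ ih => exact ih.symm
  | trans _ _ ih₁ ih₂ => exact ih₁.trans ih₂
  | or_congr _ _ ih₁ ih₂ => exact ih₁.or_congr ih₂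
  | and_congr _ _ ih₁ ih₂ => exact ih₁.and_congr ih₂
  | neg_congr _ ih =>
    exact (subst_neg_equiv a _).trans (ih.neg_congr.trans (subst_neg_equiv a _).symm)
  | or_assoc => exact .or_assoc _ _ _
  | or_comm => exact .or_comm _ _
  | and_assoc => exact .and_assoc _ _ _
  | and_comm => exact .and_comm _ _
  | dm_or A B =>
    exact (equiv.dm_or _ _).trans ((subst_neg_equiv a A).symm.and_congr (subst_neg_equiv a B).symm)
  | dm_and A B =>
    exact (equiv.dm_and _ _).trans ((subst_neg_equiv a A).symm.or_congr (subst_neg_equiv a B).symm)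
  | neg_neg A => exact (subst_neg_equiv a A).neg_congr.trans (.neg_neg _)
  | neg_f => exact .neg_f
  | neg_t => exact .neg_t
  | or_f => exact .or_f _
  | and_t => exact .and_t _
  | or_t_t => exact .or_t_t
  | and_f_f => exact .and_f_f

theorem Deriv.of_step {A B : Str} (h : _root_.step A B) : Deriv A B := .step h (.refl B)

theorem Deriv.of_equiv {A B : Str} (h : equiv A B) : Deriv A B := .eq h (.refl B)

theorem Deriv.trans {A B C : Str} (h₁ : Deriv A B) (h₂ : Deriv B C) : Deriv A C := by
  induction h₁ with
  | refl => exact h₂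
  | step s _ ih => exact .step s (ih h₂)
  | eq e _ ih => exact .eq e (ih h₂)

theorem step.deriv_subst (a : ℕ) {A B : Str} (h : step A B) :
    Deriv (_root_.subst a A) (_root_.subst a B) := by
  cases h <;> simp only [subst_fill]
  case ai_down S b =>
    by_cases hb : b = a
    · simp only [_root_.subst, if_pos hb]
      exact .of_equiv (((equiv.or_f .t).symm.trans (.or_comm _ _)).fill _)
    · simpa only [_root_.subst, if_neg hb] using .of_step (.ai_down _ b)
  case ai_up S b =>
    by_cases hb : b = a
    · simp only [_root_.subst, if_pos hb]
      exact .of_equiv ((equiv.and_t .f).fill _)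
    · simpa only [_root_.subst, if_neg hb] using .of_step (.ai_up _ b)
  case s => exact .of_step (.s _ _ _ _)
  case c_down => exact .of_step (.c_down _ _)
  case c_up => exact .of_step (.c_up _ _)
  case w_down => exact .of_step (.w_down _ _)
  case w_up => exact .of_step (.w_up _ _)

/-- atom substitution `[a↦t, ¬a↦f]` preserves derivability. -/
theorem subst_preserves_deriv (a : ℕ) (P Q : Str) (h : Deriv P Q) :
    Deriv (subst a P) (subst a Q) := by
  induction h with
  | refl => exact .refl _
  | step s _ ih => exact (s.deriv_subst a).trans ih
  | eq e _ ih => exact .eq (e.subst a) ih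
end

section
/- Weak consistency of SKS: there is no proof of f, i.e., no derivation in SKS with premise t and conclusion f. -/
def Str.eval (v : ℕ → Bool) : Str → Bool
  | .f => false
  | .t => true
  | .atom a => v a
  | .or A B => A.eval v || B.eval v
  | .and A B => A.eval v && B.eval v
  | .neg A => !A.eval v

section

variable {v : ℕ → Bool}

theorem Ctx.eval_fill_mono (S : Ctx) {A B : Str} (h : A.eval v → B.eval v) :
    (S.fill A).eval v → (S.fill B).eval v := by
  induction S with
  | hole => exact h
  | orl S T ih | orr T S ih | andl S T ih | andr T S ih =>
    simp only [Ctx.fill, Str.eval, Bool.or_eq_true, Bool.and_eq_true]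
    tauto

theorem equiv.eval_eq {A B : Str} (h : equiv A B) : A.eval v = B.eval v := by
  induction h with
  | or_assoc A B C => exact Bool.or_assoc ..
  | or_comm A B => exact Bool.or_comm ..
  | and_assoc A B C => exact Bool.and_assoc ..
  | and_comm A B => exact Bool.and_comm ..
  | _ => simp_all [Str.eval]

theorem step.eval_imp {A B : Str} (h : step A B) : A.eval v → B.eval v := by
  cases h with
  | ai_down S a | ai_up S a | c_down S R | c_up S R | w_down S R | w_up S R =>
    exact Ctx.eval_fill_mono S (by simp [Str.eval])
  | s S R U T =>
    exact Ctx.eval_fill_mono S (by simp only [Str.eval, Bool.or_eq_true, Bool.and_eq_true]; tauto)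

theorem Deriv.eval_imp {A B : Str} (h : Deriv A B) : A.eval v → B.eval v := by
  induction h with
  | refl R => exact id
  | step hs _ ih => exact ih ∘ hs.eval_imp
  | eq he _ ih => exact ih ∘ (he.eval_eq ▸ ·)

end

/-- weak consistency of SKS: there is no proof of `f`. -/
theorem weak_consistency : ¬ Deriv Str.t Str.f := fun d =>
  Bool.false_ne_true (Deriv.eval_imp (v := fun _ => true) d rfl)
end
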